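/- Let Γ be a distance-regular graph of degree k and diameter D. Then there exist positive real numbers s_0^+, …, s_{D−1}^+ and s_1^−, …, s_D^− such that for every vertex x and every Delsarte clique C at distance i from x (0 ≤ i ≤ D−1), one has |Γ_i(x) ∩ C| = s_i^+ and |Γ_{i+1}(x) ∩ C| = s_{i+1}^−; in particular these two cardinalities depend only on i. -/

import Mathlib

/-!
Let `u` be the standard sequence of `θ = θmin`. Since `θ` is an eigenvalue, the three-term
recurrence for `u` also holds at `i = D`, so `y ↦ u (d(x, y))` is a `θ`-eigenfunction, and on
the `θ`-eigenspace `∑_y u (d(x, y)) h y` is a multiple of `h x`. For a Delsarte clique `C`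
the eigenfunction `φ v = ∑_{y ∈ C} u (d(v, y))` takes the value `1 + (|C| - 1) θ / k = 0` on `C`,
hence `∑_v φ v ^ 2 = ∑_{y ∈ C} ∑_v u (d(y, v)) φ v = 0` and `φ = 0`.

If `x` is at distance `i` from `C`, then `C ⊆ Γ_i(x) ∪ Γ_{i+1}(x)`, so the two intersection
sizes `α, β` satisfy `α + β = |C|` and `α u_i + β u_{i+1} = 0`. Moving `x` one step towards `C`
shows `u_i ≠ 0` (otherwise `u_{i-1} = u_i = 0`, which the recurrence forbids), so this system
determines `α` and `β`, and it forces `β > 0` when `i < D`.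
-/

open scoped Classical

namespace CliqueBitrade

variable {V : Type*}

/-- `f` is an eigenfunction of the graph `G` with eigenvalue `θ`:
`f` is not identically zero and for every vertex the sum of `f` over its
neighbors equals `θ` times its value. -/
def IsEigenfunction (G : SimpleGraph V) (θ : ℝ) (f : V → ℝ) : Prop :=
  f ≠ 0 ∧ ∀ x : V, ∑ᶠ y ∈ G.neighborSet x, f y = θ * f x

/-- `G` is regular of degree `k`. -/
def IsRegularOfDeg (G : SimpleGraph V) (k : ℕ) : Prop :=
  ∀ v : V, (G.neighborSet v).ncard = k

/-- `(G, S)` is a `(k,s,m)` pair: `G` is regular of degree `k`, `S` is a set of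
`(s+1)`-cliques of `G`, and every edge of `G` lies in exactly `m` cliques of `S`. -/
def IsKSMPair (G : SimpleGraph V) (S : Set (Set V)) (k s m : ℕ) : Prop :=
  IsRegularOfDeg G k ∧
  (∀ C ∈ S, G.IsClique C ∧ C.ncard = s + 1) ∧
  (∀ x y : V, G.Adj x y → {C ∈ S | x ∈ C ∧ y ∈ C}.ncard = m)

/-- `T` is an independent set of vertices of `G`. -/
def IsIndependent (G : SimpleGraph V) (T : Set V) : Prop :=
  ∀ x ∈ T, ∀ y ∈ T, ¬ G.Adj x y

/-- `(T₀, T₁)` is an `S`-bitrade: a pair of disjoint nonempty independent sets such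
that every clique of `S` either meets each of `T₀`, `T₁` in exactly one vertex,
or meets neither. -/
def IsBitrade (G : SimpleGraph V) (S : Set (Set V)) (T₀ T₁ : Set V) : Prop :=
  Disjoint T₀ T₁ ∧ T₀.Nonempty ∧ T₁.Nonempty ∧
  IsIndependent G T₀ ∧ IsIndependent G T₁ ∧
  ∀ C ∈ S, ((C ∩ T₀).ncard = 1 ∧ (C ∩ T₁).ncard = 1) ∨ (C ∩ T₀ = ∅ ∧ C ∩ T₁ = ∅)

/-- The function `f^T`: `1` on `T₀`, `-1` on `T₁`, `0` elsewhere. -/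
noncomputable def fT (T₀ T₁ : Set V) : V → ℝ :=
  fun x => if x ∈ T₀ then 1 else if x ∈ T₁ then -1 else 0

/-- `θ` is the minimum eigenvalue of (the adjacency matrix of) `G`. -/
def IsMinEigenvalue (G : SimpleGraph V) (θ : ℝ) : Prop :=
  (∃ f : V → ℝ, IsEigenfunction G θ f) ∧
  ∀ θ' : ℝ, (∃ f : V → ℝ, IsEigenfunction G θ' f) → θ ≤ θ'

/-- `G` is a connected distance-regular graph of diameter `D` with intersection
numbers `b i`, `c i`. -/
def IsDistRegular (G : SimpleGraph V) (D : ℕ) (b c : ℕ → ℕ) : Prop :=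
  G.Connected ∧ (∀ x y : V, G.dist x y ≤ D) ∧ (∃ x y : V, G.dist x y = D) ∧
  b D = 0 ∧ c 0 = 0 ∧
  ∀ i ≤ D, ∀ x y : V, G.dist x y = i →
    {z : V | G.Adj y z ∧ G.dist x z = i + 1}.ncard = b i ∧
    (1 ≤ i → {z : V | G.Adj y z ∧ G.dist x z = i - 1}.ncard = c i)

/-- A Delsarte clique of a graph of degree `k` with minimum eigenvalue `θmin`:
a clique with exactly `1 - k/θmin` vertices. -/
def IsDelsarteClique (G : SimpleGraph V) (k : ℕ) (θmin : ℝ) (C : Set V) : Prop :=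
  G.IsClique C ∧ (C.ncard : ℝ) = 1 - (k : ℝ) / θmin

/-- The distance from the vertex `x` to the set `C`. -/
noncomputable def distToSet (G : SimpleGraph V) (C : Set V) (x : V) : ℕ :=
  sInf ((G.dist x) '' C)

/-- `C` is a completely regular set of `G` with covering radius `ρ` and
intersection array given by `b`, `c`. -/
def IsCompletelyRegularWith (G : SimpleGraph V) (C : Set V) (ρ : ℕ) (b c : ℕ → ℕ) : Prop :=
  (∃ y : V, distToSet G C y = ρ) ∧ (∀ y : V, distToSet G C y ≤ ρ) ∧
  b ρ = 0 ∧ c 0 = 0 ∧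
  ∀ i ≤ ρ, ∀ y : V, distToSet G C y = i →
    {z : V | G.Adj y z ∧ distToSet G C z = i + 1}.ncard = b i ∧
    (1 ≤ i → {z : V | G.Adj y z ∧ distToSet G C z = i - 1}.ncard = c i)

/-- `C` is a completely regular set of `G` with covering radius `ρ`. -/
def IsCompletelyRegular (G : SimpleGraph V) (C : Set V) (ρ : ℕ) : Prop :=
  ∃ b c : ℕ → ℕ, IsCompletelyRegularWith G C ρ b c

/-- `(G, S)` is a Delsarte pair: a `(k,s,m)` pair where `G` is distance-regular
(with diameter `D`, intersection numbers `b`, `c`, minimum eigenvalue `θmin`)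
and all cliques of `S` are Delsarte cliques. -/
def IsDelsartePair (G : SimpleGraph V) (S : Set (Set V)) (k s m D : ℕ)
    (b c : ℕ → ℕ) (θmin : ℝ) : Prop :=
  IsKSMPair G S k s m ∧ IsDistRegular G D b c ∧ IsMinEigenvalue G θmin ∧
  ∀ C ∈ S, IsDelsarteClique G k θmin C

/-- The weight-distribution coefficients `W i = W^i_{A,θ}` determined by the
intersection array of a distance-regular graph of degree `k` and an eigenvalue `θ`. -/
def IsWDCoeffs (k : ℕ) (b c : ℕ → ℕ) (θ : ℝ) (D : ℕ) (W : ℕ → ℝ) : Prop :=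
  W 0 = 1 ∧ W 1 = θ ∧
  ∀ i : ℕ, 2 ≤ i → i ≤ D →
    W i = ((θ - ((k : ℝ) - b (i - 1) - c (i - 1))) * W (i - 1) - (b (i - 2) : ℝ) * W (i - 2)) / (c i : ℝ)

open Finset SimpleGraph Matrix

section Metric

variable {G : SimpleGraph V}

lemma exists_adj_dist_eq_of_dist_eq_succ (hG : G.Connected) {x y : V} {n : ℕ}
    (h : G.dist x y = n + 1) : ∃ y', G.Adj y y' ∧ G.dist x y' = n := by
  rw [dist_comm] at h
  obtain ⟨p, hp⟩ := hG.exists_walk_length_eq_dist y x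
  cases p with
  | nil => simp at h
  | @cons _ y' _ hadj q =>
    have hq : G.dist y' x ≤ n := by
      have := dist_le q
      simp only [Walk.length_cons] at hp
      omega
    have := hG.dist_triangle (u := y) (v := y') (w := x)
    rw [dist_eq_one_iff_adj.2 hadj] at this
    exact ⟨y', hadj, by rw [dist_comm]; omega⟩

lemma distToSet_le_dist {C : Set V} (x : V) {y : V} (hy : y ∈ C) :
    distToSet G C x ≤ G.dist x y :=
  Nat.sInf_le ⟨y, hy, rfl⟩

lemma exists_mem_dist_eq_distToSet {C : Set V} (hC : C.Nonempty) (x : V) :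
    ∃ y ∈ C, G.dist x y = distToSet G C x :=
  Nat.sInf_mem (hC.image _)

lemma IsClique.dist_eq_distToSet_or (hG : G.Connected) {C : Set V} (hC : G.IsClique C)
    (x : V) {y : V} (hy : y ∈ C) :
    G.dist x y = distToSet G C x ∨ G.dist x y = distToSet G C x + 1 := by
  obtain ⟨y₀, hy₀, hxy₀⟩ := exists_mem_dist_eq_distToSet (G := G) ⟨y, hy⟩ x
  have htri := hG.dist_triangle (u := x) (v := y₀) (w := y)
  have := distToSet_le_dist (G := G) x hy
  rcases eq_or_ne y₀ y with rfl | hne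
  · omega
  · rw [dist_eq_one_iff_adj.2 (hC hy₀ hy hne)] at htri
    omega

lemma exists_adj_distToSet_eq (hG : G.Connected) {C : Set V} {x : V} {i : ℕ}
    (hC : C.Nonempty) (hx : distToSet G C x = i + 1) :
    ∃ x', G.Adj x x' ∧ distToSet G C x' = i := by
  obtain ⟨y₀, hy₀, hxy₀⟩ := exists_mem_dist_eq_distToSet (G := G) hC x
  obtain ⟨x', hadj, hx'y₀⟩ :=
    exists_adj_dist_eq_of_dist_eq_succ hG ((dist_comm (G := G)).trans (hxy₀.trans hx))
  rw [dist_comm] at hx'y₀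
  obtain ⟨y₁, hy₁, hx'y₁⟩ := exists_mem_dist_eq_distToSet (G := G) hC x'
  have h₁ := distToSet_le_dist (G := G) x hy₁
  have h₂ := distToSet_le_dist (G := G) x' hy₀
  have := hG.dist_triangle (u := x) (v := x') (w := y₁)
  rw [dist_eq_one_iff_adj.2 hadj] at this
  exact ⟨x', hadj, by omega⟩

lemma IsDistRegular.dist_le {D : ℕ} {b c : ℕ → ℕ} (hG : IsDistRegular G D b c) (x y : V) :
    G.dist x y ≤ D :=
  hG.2.1 x y

lemma IsDistRegular.exists_dist_eq_of_le {D : ℕ} {b c : ℕ → ℕ} (hG : IsDistRegular G D b c)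
    {i : ℕ} (hi : i ≤ D) : ∃ x y, G.dist x y = i := by
  suffices ∀ j ≤ D, ∃ x y, G.dist x y = D - j by
    simpa [Nat.sub_sub_self hi] using this (D - i) (Nat.sub_le D i)
  intro j hj
  induction j with
  | zero => simpa using (hG.2.2.1 : ∃ x y, G.dist x y = D)
  | succ j ih =>
    obtain ⟨x, y, hxy⟩ := ih (by omega)
    obtain ⟨y', -, hxy'⟩ :=
      exists_adj_dist_eq_of_dist_eq_succ hG.1 (n := D - (j + 1)) (hxy.trans (by omega))
    exact ⟨x, y', hxy'⟩

lemma IsDistRegular.distToSet_le {D : ℕ} {b c : ℕ → ℕ} (hG : IsDistRegular G D b c)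
    {C : Set V} (hC : C.Nonempty) (x : V) : distToSet G C x ≤ D := by
  obtain ⟨y, hy⟩ := hC
  exact (distToSet_le_dist x hy).trans (hG.dist_le x y)

end Metric

section DistRegular

variable [Fintype V] {G : SimpleGraph V} {D k : ℕ} {b c : ℕ → ℕ} {x y : V} {i : ℕ}

lemma ncard_setOf_adj_and (P : V → Prop) [DecidablePred P] (y : V) :
    {z | G.Adj y z ∧ P z}.ncard = #{z ∈ G.neighborFinset y | P z} := by
  rw [Set.ncard_eq_toFinset_card']
  congr 1
  ext
  simp

lemma IsRegularOfDeg.card_neighborFinset (hk : IsRegularOfDeg G k) (v : V) :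
    #(G.neighborFinset v) = k := by
  rw [← hk v, Set.ncard_eq_toFinset_card']
  rfl

namespace IsDistRegular

lemma card_succ (hG : IsDistRegular G D b c) (hxy : G.dist x y = i) :
    #{z ∈ G.neighborFinset y | G.dist x z = i + 1} = b i := by
  rw [← ncard_setOf_adj_and (fun z => G.dist x z = i + 1)]
  exact (hG.2.2.2.2.2 i (hxy ▸ hG.dist_le x y) x y hxy).1

lemma card_pred (hG : IsDistRegular G D b c) (hi : 1 ≤ i) (hxy : G.dist x y = i) :
    #{z ∈ G.neighborFinset y | G.dist x z = i - 1} = c i := by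
  rw [← ncard_setOf_adj_and (fun z => G.dist x z = i - 1)]
  exact (hG.2.2.2.2.2 i (hxy ▸ hG.dist_le x y) x y hxy).2 hi

lemma b_zero (hG : IsDistRegular G D b c) (hk : IsRegularOfDeg G k) : b 0 = k := by
  obtain ⟨x, -⟩ := hG.2.2.1
  rw [← hG.card_succ (SimpleGraph.dist_self (v := x)), ← hk.card_neighborFinset x]
  congr 1
  ext z
  simp +contextual

lemma sum_neighborFinset_comp_dist (hG : IsDistRegular G D b c) (hk : IsRegularOfDeg G k)
    (F : ℕ → ℝ) (hxy : G.dist x y = i) :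
    ∑ w ∈ G.neighborFinset y, F (G.dist x w) =
      c i * F (i - 1) + (k - b i - c i) * F i + b i * F (i + 1) := by
  rcases Nat.eq_zero_or_pos i with rfl | hi
  · obtain rfl := hG.1.dist_eq_zero_iff.1 hxy
    have hF : ∀ w ∈ G.neighborFinset x, F (G.dist x w) = F 1 := fun w hw => by
      rw [dist_eq_one_iff_adj.2 ((mem_neighborFinset ..).1 hw)]
    rw [sum_congr rfl hF, sum_const, hk.card_neighborFinset, (hG.2.2.2.2.1 : c 0 = 0),
      hG.b_zero hk]
    simp
  have hsplit : ∀ F : ℕ → ℝ, ∑ w ∈ G.neighborFinset y, F (G.dist x w) =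
      c i * F (i - 1) + #{w ∈ G.neighborFinset y | G.dist x w = i} * F i + b i * F (i + 1) := by
    intro F
    rw [← sum_fiberwise_of_maps_to (g := G.dist x) (t := {i - 1, i, i + 1}) fun w hw => by
      rcases ((mem_neighborFinset ..).1 hw).diff_dist_adj (u := x) with h | h | h <;> simp [h, hxy]]
    rw [sum_insert (by simp; omega), sum_insert (by simp), sum_singleton]
    simp only [fun e => sum_congr rfl fun w (hw : w ∈ {w ∈ G.neighborFinset y | G.dist x w = e}) =>
      congrArg F (mem_filter.1 hw).2, sum_const, nsmul_eq_mul, hG.card_pred hi hxy,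
      hG.card_succ hxy]
    ring
  -- with `F = 1` the split counts all `k` neighbours
  have hdeg := hsplit 1
  simp only [Pi.one_apply, sum_const, nsmul_eq_mul, mul_one, hk.card_neighborFinset] at hdeg
  rw [hsplit F, hdeg]
  ring

lemma c_pos (hG : IsDistRegular G D b c) (hi : 1 ≤ i) (hiD : i ≤ D) : 0 < c i := by
  obtain ⟨x, y, hxy⟩ := hG.exists_dist_eq_of_le hiD
  obtain ⟨y', hadj, hxy'⟩ :=
    exists_adj_dist_eq_of_dist_eq_succ hG.1 (n := i - 1) (hxy.trans (by omega))
  rw [← hG.card_pred hi hxy]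
  exact card_pos.2 ⟨y', by simp [hadj, hxy']⟩

lemma b_pos (hG : IsDistRegular G D b c) (hi : i < D) : 0 < b i := by
  obtain ⟨x, y, hxy⟩ := hG.exists_dist_eq_of_le hi
  obtain ⟨y', hadj, hxy'⟩ := exists_adj_dist_eq_of_dist_eq_succ hG.1 hxy
  rw [← hG.card_succ hxy']
  exact card_pos.2 ⟨y, by simp [hadj.symm, hxy]⟩

lemma exists_dist_eq (hG : IsDistRegular G D b c) (x : V) (hi : i ≤ D) : ∃ y, G.dist x y = i := by
  induction i with
  | zero => exact ⟨x, dist_self⟩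
  | succ i ih =>
    obtain ⟨y, hxy⟩ := ih (by omega)
    have hb := hG.card_succ hxy ▸ hG.b_pos (by omega : i < D)
    obtain ⟨z, hz⟩ := card_pos.1 hb
    exact ⟨z, (mem_filter.1 hz).2⟩

end IsDistRegular

end DistRegular

section Spheres

variable [Fintype V] {G : SimpleGraph V} {D k : ℕ} {b c : ℕ → ℕ} {x y : V} {i j : ℕ}

noncomputable def sphere (G : SimpleGraph V) (x : V) (i : ℕ) : Finset V := {y | G.dist x y = i}

@[simp]
lemma mem_sphere : y ∈ sphere G x i ↔ G.dist x y = i := by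
  simp [sphere]

lemma sphere_zero (hG : G.Connected) (x : V) : sphere G x 0 = {x} := by
  ext y
  simp [hG.dist_eq_zero_iff, eq_comm]

lemma sphere_one (x : V) : sphere G x 1 = G.neighborFinset x := by
  ext y
  simp

lemma IsDistRegular.sphere_eq_empty (hG : IsDistRegular G D b c) (x : V) (hi : D < i) :
    sphere G x i = ∅ := by
  ext y
  have := hG.dist_le x y
  simp only [mem_sphere, Finset.notMem_empty, iff_false]
  omega

lemma IsDistRegular.card_sphere_mul_b (hG : IsDistRegular G D b c) (x : V) (i : ℕ) :
    #(sphere G x i) * b i = #(sphere G x (i + 1)) * c (i + 1) := by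
  have above : ∀ y ∈ sphere G x i, #(bipartiteAbove G.Adj (sphere G x (i + 1)) y) = b i := by
    intro y hy
    rw [← hG.card_succ (mem_sphere.1 hy)]
    congr 1
    ext
    simp [bipartiteAbove, and_comm]
  have below : ∀ w ∈ sphere G x (i + 1), #(bipartiteBelow G.Adj (sphere G x i) w) = c (i + 1) := by
    intro w hw
    rw [← hG.card_pred (by omega) (mem_sphere.1 hw)]
    congr 1
    ext
    simp [bipartiteBelow, and_comm, adj_comm]
  have h := sum_card_bipartiteAbove_eq_sum_card_bipartiteBelow
    (s := sphere G x i) (t := sphere G x (i + 1)) G.Adj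
  rw [sum_congr rfl above, sum_congr rfl below] at h
  simpa [mul_comm] using h

lemma IsDistRegular.card_filter_neighborFinset_dist_eq (hG : IsDistRegular G D b c)
    (hk : IsRegularOfDeg G k) (x w : V) (hj : 1 ≤ j) :
    (#{y ∈ G.neighborFinset w | G.dist x y = j} : ℝ) =
      (if G.dist x w = j - 1 then (b (j - 1) : ℝ) else 0) +
      (if G.dist x w = j then (k - b j - c j : ℝ) else 0) +
      (if G.dist x w = j + 1 then (c (j + 1) : ℝ) else 0) := by
  have h := hG.sum_neighborFinset_comp_dist hk (fun e => if e = j then (1 : ℝ) else 0) rfl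
    (x := x) (y := w)
  rw [sum_boole] at h
  rw [h]
  clear h
  generalize G.dist x w = e
  split_ifs <;> first | omega | ((subst_vars; simp) <;> congr 2)

/-- `A_j A = b_{j-1} A_{j-1} + a_j A_j + c_{j+1} A_{j+1}` for the distance matrices `A_j`,
applied to `h` at `x`. -/
lemma IsDistRegular.sum_sphere_sum_neighborFinset (hG : IsDistRegular G D b c)
    (hk : IsRegularOfDeg G k) (h : V → ℝ) (x : V) (hj : 1 ≤ j) :
    ∑ y ∈ sphere G x j, ∑ w ∈ G.neighborFinset y, h w =
      b (j - 1) * ∑ y ∈ sphere G x (j - 1), h y + (k - b j - c j) * ∑ y ∈ sphere G x j, h y +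
        c (j + 1) * ∑ y ∈ sphere G x (j + 1), h y := by
  calc ∑ y ∈ sphere G x j, ∑ w ∈ G.neighborFinset y, h w
      = ∑ w, ∑ y ∈ G.neighborFinset w with G.dist x y = j, h w :=
        sum_comm' fun y w => by simp [adj_comm, and_comm]
    _ = ∑ w, h w * #{y ∈ G.neighborFinset w | G.dist x y = j} := by
        simp only [sum_const, nsmul_eq_mul, mul_comm]
    _ = _ := by
      simp only [hG.card_filter_neighborFinset_dist_eq hk x _ hj, sphere, sum_filter, mul_sum,
        mul_add, sum_add_distrib, mul_ite, mul_zero]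
      simp only [mul_comm (h _)]

end Spheres

section Spectral

variable [Fintype V] {G : SimpleGraph V} {θ : ℝ} {f : V → ℝ}

lemma isEigenfunction_iff : IsEigenfunction G θ f ↔ f ≠ 0 ∧ G.adjMatrix ℝ *ᵥ f = θ • f := by
  simp only [IsEigenfunction, funext_iff, adjMatrix_mulVec_apply,
    Pi.smul_apply, smul_eq_mul, ← coe_neighborFinset, finsum_mem_coe_finset]

lemma IsMinEigenvalue.neg_of_adj (hθ : IsMinEigenvalue G θ) {x y : V} (hxy : G.Adj x y) :
    θ < 0 := by
  by_contra! h
  have hA := G.isHermitian_adjMatrix ℝ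
  have hpsd : (G.adjMatrix ℝ).PosSemidef := hA.posSemidef_iff_eigenvalues_nonneg.2 fun i =>
    h.trans <| hθ.2 _ ⟨_, isEigenfunction_iff.2
      ⟨(WithLp.ofLp_eq_zero 2).ne.2 <| hA.eigenvectorBasis.orthonormal.ne_zero i,
        hA.mulVec_eigenvectorBasis i⟩⟩
  have := hpsd.dotProduct_mulVec_nonneg (Pi.single x 1 - Pi.single y 1)
  simp [hxy, hxy.symm] at this
  linarith

lemma IsMinEigenvalue.nonpos (hθ : IsMinEigenvalue G θ) : θ ≤ 0 := by
  by_cases h : ∃ x y, G.Adj x y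
  · obtain ⟨x, y, hxy⟩ := h
    exact (hθ.neg_of_adj hxy).le
  push Not at h
  obtain ⟨f, hf0, hf⟩ := hθ.1
  obtain ⟨x, hx⟩ := Function.ne_iff.1 hf0
  have := hf x
  rw [show G.neighborSet x = ∅ by ext y; simp [h x y], finsum_mem_empty] at this
  exact (mul_eq_zero.1 this.symm).resolve_right hx |>.le

end Spectral

/-- The standard sequence of `θ`: the solution of
`c i * u (i - 1) + (k - b i - c i) * u i + b i * u (i + 1) = θ * u i` with `u 0 = 1`. -/
noncomputable def standardSeq (k : ℕ) (b c : ℕ → ℕ) (θ : ℝ) : ℕ → ℝ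
  | 0 => 1
  | 1 => θ / k
  | i + 2 => ((θ - (k - b (i + 1) - c (i + 1))) * standardSeq k b c θ (i + 1) -
      c (i + 1) * standardSeq k b c θ i) / b (i + 1)

section StandardSeq

variable [Fintype V] {G : SimpleGraph V} {D k : ℕ} {b c : ℕ → ℕ} {θ : ℝ} {i : ℕ}

local notation "u" => standardSeq k b c θ

lemma IsDistRegular.k_pos (hG : IsDistRegular G D b c) (hk : IsRegularOfDeg G k) (hD : 0 < D) :
    0 < k :=
  hG.b_zero hk ▸ hG.b_pos hD

lemma IsDistRegular.standardSeq_rec_of_lt (hG : IsDistRegular G D b c) (hk : IsRegularOfDeg G k)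
    (hi : i < D) :
    c i * u (i - 1) + (k - b i - c i) * u i + b i * u (i + 1) = θ * u i := by
  have hb : (b i : ℝ) ≠ 0 := by exact_mod_cast (hG.b_pos hi).ne'
  match i with
  | 0 =>
    simp only [(hG.2.2.2.2.1 : c 0 = 0), hG.b_zero hk, standardSeq] at hb ⊢
    field_simp
    ring
  | i + 1 =>
    simp only [standardSeq, Nat.add_sub_cancel]
    field_simp
    ring

lemma IsDistRegular.sum_sphere_eq_card_mul (hG : IsDistRegular G D b c)
    (hk : IsRegularOfDeg G k) {h : V → ℝ} (hh : G.adjMatrix ℝ *ᵥ h = θ • h) (x : V)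
    (hi : i ≤ D) : ∑ y ∈ sphere G x i, h y = #(sphere G x i) * u i * h x := by
  have heig : ∀ y, ∑ w ∈ G.neighborFinset y, h w = θ * h y := fun y => by
    simpa [adjMatrix_mulVec_apply] using congrFun hh y
  induction i using Nat.strong_induction_on with
  | _ i ih =>
  match i with
  | 0 => simp [sphere_zero hG.1, standardSeq]
  | 1 =>
    have hk0 : (k : ℝ) ≠ 0 := by exact_mod_cast (hG.k_pos hk hi).ne'
    rw [sphere_one, heig, hk.card_neighborFinset]
    simp only [standardSeq]
    field_simp
  | j + 2 =>
    have h₀ := ih j (by omega) (by omega)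
    have h₁ := ih (j + 1) (by omega) (by omega)
    have hid := hG.sum_sphere_sum_neighborFinset hk h x (j := j + 1) (by omega)
    simp only [heig, ← mul_sum, Nat.add_sub_cancel] at hid
    have hrec := hG.standardSeq_rec_of_lt hk (θ := θ) (i := j + 1) (by omega)
    simp only [Nat.add_sub_cancel] at hrec
    have hK₀ : (#(sphere G x j) * b j : ℝ) = #(sphere G x (j + 1)) * c (j + 1) := by
      exact_mod_cast hG.card_sphere_mul_b x j
    have hK₁ : (#(sphere G x (j + 1)) * b (j + 1) : ℝ) = #(sphere G x (j + 2)) * c (j + 2) := by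
      exact_mod_cast hG.card_sphere_mul_b x (j + 1)
    have hc : (c (j + 2) : ℝ) ≠ 0 := by exact_mod_cast (hG.c_pos (by omega) hi).ne'
    apply mul_left_cancel₀ hc
    linear_combination -hid + (θ - (k - b (j + 1) - c (j + 1))) * h₁ - b j * h₀ -
      u j * h x * hK₀ - #(sphere G x (j + 1)) * h x * hrec + u (j + 2) * h x * hK₁

lemma IsDistRegular.standardSeq_rec (hG : IsDistRegular G D b c) (hk : IsRegularOfDeg G k)
    (hθ : ∃ f, IsEigenfunction G θ f) (hD : 0 < D) (hi : i ≤ D) :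
    c i * u (i - 1) + (k - b i - c i) * u i + b i * u (i + 1) = θ * u i := by
  rcases hi.lt_or_eq with hi | rfl
  · exact hG.standardSeq_rec_of_lt hk hi
  obtain ⟨f, hf⟩ := hθ
  obtain ⟨hf0, hf⟩ := isEigenfunction_iff.1 hf
  obtain ⟨z, hz⟩ := Function.ne_iff.1 hf0
  have hid := hG.sum_sphere_sum_neighborFinset hk f z (j := i) hD
  have heig : ∀ y, ∑ w ∈ G.neighborFinset y, f w = θ * f y := fun y => by
    simpa [adjMatrix_mulVec_apply] using congrFun hf y
  simp only [heig, ← mul_sum, hG.sphere_eq_empty z (Nat.lt_succ_self i), sum_empty, mul_zero,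
    add_zero, hG.sum_sphere_eq_card_mul hk hf z le_rfl,
    hG.sum_sphere_eq_card_mul hk hf z (Nat.sub_le i 1)] at hid
  have hK : (#(sphere G z (i - 1)) * b (i - 1) : ℝ) = #(sphere G z i) * c i := by
    have := hG.card_sphere_mul_b z (i - 1)
    rw [Nat.sub_add_cancel hD] at this
    exact_mod_cast this
  obtain ⟨y, hy⟩ := hG.exists_dist_eq z le_rfl
  have hKz : (#(sphere G z i) : ℝ) * f z ≠ 0 :=
    mul_ne_zero (by exact_mod_cast (card_pos.2 ⟨y, mem_sphere.2 hy⟩).ne') (by simpa using hz)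
  rw [(hG.2.2.2.1 : b i = 0)] at hid ⊢
  apply mul_left_cancel₀ hKz
  linear_combination -hid - u (i - 1) * f z * hK

lemma IsDistRegular.sum_neighborFinset_standardSeq_dist (hG : IsDistRegular G D b c)
    (hk : IsRegularOfDeg G k) (hθ : ∃ f, IsEigenfunction G θ f) (hD : 0 < D) (x y : V) :
    ∑ w ∈ G.neighborFinset y, u (G.dist x w) = θ * u (G.dist x y) := by
  rw [hG.sum_neighborFinset_comp_dist hk _ rfl]
  exact hG.standardSeq_rec hk hθ hD (hG.dist_le x y)

lemma IsDistRegular.sum_standardSeq_dist_mul (hG : IsDistRegular G D b c)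
    (hk : IsRegularOfDeg G k) {h : V → ℝ} (hh : G.adjMatrix ℝ *ᵥ h = θ • h) (x : V) :
    ∑ y, u (G.dist x y) * h y = (∑ i ∈ range (D + 1), #(sphere G x i) * u i ^ 2) * h x := by
  rw [← sum_fiberwise_of_maps_to (g := G.dist x) (t := range (D + 1))
    fun y _ => mem_range.2 (Nat.lt_succ_of_le (hG.dist_le x y)), sum_mul]
  refine sum_congr rfl fun i hi => ?_
  have : ∑ y with G.dist x y = i, u (G.dist x y) * h y = u i * ∑ y ∈ sphere G x i, h y := by
    rw [mul_sum]
    exact sum_congr rfl fun y hy => by rw [(mem_filter.1 hy).2]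
  rw [this, hG.sum_sphere_eq_card_mul hk hh x (Nat.le_of_lt_succ (mem_range.1 hi))]
  ring

lemma IsDistRegular.standardSeq_ne_zero_of_succ_eq_zero (hG : IsDistRegular G D b c)
    (hk : IsRegularOfDeg G k) {m : ℕ} (hm : m < D) (h : u (m + 1) = 0) : u m ≠ 0 := by
  induction m with
  | zero => simp [standardSeq]
  | succ m ih =>
    intro hm0
    have hrec := hG.standardSeq_rec_of_lt hk (θ := θ) hm
    have hc : (c (m + 1) : ℝ) ≠ 0 := by exact_mod_cast (hG.c_pos (by omega) hm.le).ne'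
    simp only [Nat.add_sub_cancel, hm0, h, mul_zero, add_zero] at hrec
    exact ih (by omega) hm0 ((mul_eq_zero.1 hrec).resolve_left hc)

end StandardSeq

lemma eq_of_mul_add_mul_eq_zero {α β α' β' s p q : ℝ} (hs : s ≠ 0) (hp : p ≠ 0)
    (h : α + β = s) (h' : α' + β' = s) (e : α * p + β * q = 0) (e' : α' * p + β' * q = 0) :
    β = β' := by
  have hqp : q - p ≠ 0 := fun hqp => hp <| (mul_eq_zero.1 (by
    linear_combination e - β * hqp - p * h : s * p = 0)).resolve_left hs
  exact sub_eq_zero.1 <| (mul_eq_zero.1 (by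
    linear_combination e - e' - p * h + p * h' : (β - β') * (q - p) = 0)).resolve_right hqp

section DelsarteClique

variable [Fintype V] {G : SimpleGraph V} {D k : ℕ} {b c : ℕ → ℕ} {θ : ℝ} {C : Set V} {x : V}
  {i : ℕ}

local notation "u" => standardSeq k b c θ

lemma ncard_sep_eq_card_filter (C : Set V) (p : V → Prop) [DecidablePred p] :
    {y ∈ C | p y}.ncard = #{y ∈ C.toFinset | p y} := by
  rw [Set.ncard_eq_toFinset_card']
  congr 1
  ext
  simp

lemma IsClique.ncard_add_ncard (hG : G.Connected) (hC : G.IsClique C) (hx : distToSet G C x = i) :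
    {y ∈ C | G.dist x y = i}.ncard + {y ∈ C | G.dist x y = i + 1}.ncard = C.ncard := by
  rw [← Set.ncard_union_eq <| Set.disjoint_left.2 fun y h₁ h₂ => by
    have := h₁.2.symm.trans h₂.2
    omega]
  congr 1
  ext y
  simp only [Set.mem_union, Set.mem_sep_iff, ← and_or_left, and_iff_left_iff_imp, ← hx]
  exact IsClique.dist_eq_distToSet_or hG hC x

lemma ncard_dist_eq_distToSet_pos (hC : C.Nonempty) (hx : distToSet G C x = i) :
    0 < {y ∈ C | G.dist x y = i}.ncard := by
  obtain ⟨y, hy, hxy⟩ := exists_mem_dist_eq_distToSet (G := G) hC x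
  exact (Set.ncard_pos).2 ⟨y, hy, hxy.trans hx⟩

lemma IsDelsarteClique.nonempty (hC : IsDelsarteClique G k θ C) (hθ : IsMinEigenvalue G θ) :
    C.Nonempty := by
  refine Set.nonempty_of_ncard_ne_zero fun h => ?_
  have := div_nonpos_of_nonneg_of_nonpos k.cast_nonneg hθ.nonpos
  have := hC.2
  rw [h] at this
  push_cast at this
  linarith

lemma IsDelsarteClique.sum_standardSeq_dist_eq_zero (hG : IsDistRegular G D b c)
    (hk : IsRegularOfDeg G k) (hθ : IsMinEigenvalue G θ) (hD : 0 < D)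
    (hC : IsDelsarteClique G k θ C) (x : V) : ∑ y ∈ C.toFinset, u (G.dist x y) = 0 := by
  obtain ⟨x₀, y₀, hxy₀⟩ := hG.exists_dist_eq_of_le hD
  have hθ0 : θ ≠ 0 := (hθ.neg_of_adj (dist_eq_one_iff_adj.1 hxy₀)).ne
  have hk0 : (k : ℝ) ≠ 0 := by exact_mod_cast (hG.k_pos hk hD).ne'
  set φ : V → ℝ := fun v => ∑ y ∈ C.toFinset, u (G.dist v y) with hφ
  have hφeig : G.adjMatrix ℝ *ᵥ φ = θ • φ := by
    ext v
    simp only [adjMatrix_mulVec_apply, Pi.smul_apply, smul_eq_mul, hφ, mul_sum]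
    rw [sum_comm]
    refine sum_congr rfl fun y _ => ?_
    simpa only [SimpleGraph.dist_comm] using hG.sum_neighborFinset_standardSeq_dist hk hθ.1 hD y v
  have hφC : ∀ v ∈ C, φ v = 0 := by
    intro v hv
    have hadj : ∀ y ∈ C.toFinset.erase v, u (G.dist v y) = θ / k := fun y hy => by
      rw [dist_eq_one_iff_adj.2 (hC.1 hv (Set.mem_toFinset.1 (mem_of_mem_erase hy))
        (ne_of_mem_erase hy).symm)]
      rfl
    have hcard : (#(C.toFinset.erase v) : ℝ) = -k / θ := by
      rw [card_erase_of_mem (Set.mem_toFinset.2 hv), ← Set.ncard_eq_toFinset_card',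
        Nat.cast_sub ((Set.ncard_pos).2 ⟨v, hv⟩), hC.2]
      ring
    show ∑ y ∈ C.toFinset, u (G.dist v y) = 0
    rw [← add_sum_erase _ _ (Set.mem_toFinset.2 hv), sum_congr rfl hadj, sum_const,
      nsmul_eq_mul, hcard, SimpleGraph.dist_self]
    simp only [standardSeq]
    field_simp
    ring
  have hsq : ∑ v, φ v ^ 2 = 0 := calc
    ∑ v, φ v ^ 2 = ∑ v, ∑ y ∈ C.toFinset, u (G.dist v y) * φ v :=
      sum_congr rfl fun v _ => (sq (φ v)).trans (sum_mul _ _ _)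
    _ = ∑ y ∈ C.toFinset, ∑ v, u (G.dist y v) * φ v :=
      sum_comm.trans <| sum_congr rfl fun y _ => sum_congr rfl fun v _ => by
        rw [SimpleGraph.dist_comm]
    _ = 0 := sum_eq_zero fun y hy => by
      rw [hG.sum_standardSeq_dist_mul hk hφeig y, hφC y (Set.mem_toFinset.1 hy), mul_zero]
  exact pow_eq_zero_iff two_ne_zero |>.1 <|
    (sum_eq_zero_iff_of_nonneg fun v _ => sq_nonneg (φ v)).1 hsq x (mem_univ x)

lemma IsDelsarteClique.ncard_mul_add_ncard_mul_eq_zero (hG : IsDistRegular G D b c)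
    (hk : IsRegularOfDeg G k) (hθ : IsMinEigenvalue G θ) (hD : 0 < D)
    (hC : IsDelsarteClique G k θ C) (hx : distToSet G C x = i) :
    ({y ∈ C | G.dist x y = i}.ncard : ℝ) * u i + {y ∈ C | G.dist x y = i + 1}.ncard * u (i + 1) =
      0 := by
  have h := hC.sum_standardSeq_dist_eq_zero hG hk hθ hD x
  rw [← sum_fiberwise_of_maps_to (g := G.dist x) (t := {i, i + 1}) fun y hy => by
    simpa [hx] using IsClique.dist_eq_distToSet_or hG.1 hC.1 x (Set.mem_toFinset.1 hy)] at h
  rw [sum_pair (by omega)] at h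
  simp only [fun e => sum_congr rfl fun y (hy : y ∈ {y ∈ C.toFinset | G.dist x y = e}) =>
    congrArg u (mem_filter.1 hy).2, sum_const, nsmul_eq_mul] at h
  rwa [ncard_sep_eq_card_filter, ncard_sep_eq_card_filter]

lemma IsDelsarteClique.standardSeq_ne_zero (hG : IsDistRegular G D b c)
    (hk : IsRegularOfDeg G k) (hθ : IsMinEigenvalue G θ) (hD : 0 < D)
    (hC : IsDelsarteClique G k θ C) (hx : distToSet G C x = i) : u i ≠ 0 := by
  cases i with
  | zero => simp [standardSeq]
  | succ j =>
    intro hu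
    obtain ⟨x', -, hx'⟩ := exists_adj_distToSet_eq hG.1 (hC.nonempty hθ) hx
    have hconf := hC.ncard_mul_add_ncard_mul_eq_zero hG hk hθ hD hx'
    rw [hu, mul_zero, add_zero] at hconf
    have hpos : ({y ∈ C | G.dist x' y = j}.ncard : ℝ) ≠ 0 := by
      exact_mod_cast (ncard_dist_eq_distToSet_pos (hC.nonempty hθ) hx').ne'
    have hjD : j < D := by
      have := hG.distToSet_le (hC.nonempty hθ) x
      omega
    exact hG.standardSeq_ne_zero_of_succ_eq_zero hk hjD hu
      ((mul_eq_zero.1 hconf).resolve_left hpos)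

lemma IsDelsarteClique.ncard_dist_eq_succ_pos (hG : IsDistRegular G D b c)
    (hk : IsRegularOfDeg G k) (hθ : IsMinEigenvalue G θ) (hC : IsDelsarteClique G k θ C)
    (hx : distToSet G C x = i) (hi : i < D) : 0 < {y ∈ C | G.dist x y = i + 1}.ncard := by
  have hD : 0 < D := by omega
  refine Nat.pos_of_ne_zero fun h0 => ?_
  have hconf := hC.ncard_mul_add_ncard_mul_eq_zero hG hk hθ hD hx
  rw [h0, Nat.cast_zero, zero_mul, add_zero] at hconf
  have hpos : ({y ∈ C | G.dist x y = i}.ncard : ℝ) ≠ 0 := by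
    exact_mod_cast (ncard_dist_eq_distToSet_pos (hC.nonempty hθ) hx).ne'
  exact hC.standardSeq_ne_zero hG hk hθ hD hx ((mul_eq_zero.1 hconf).resolve_left hpos)

lemma IsDelsarteClique.ncard_eq_of_distToSet_eq (hG : IsDistRegular G D b c)
    (hk : IsRegularOfDeg G k) (hθ : IsMinEigenvalue G θ) {C' : Set V} {x' : V}
    (hC : IsDelsarteClique G k θ C) (hC' : IsDelsarteClique G k θ C')
    (hx : distToSet G C x = i) (hx' : distToSet G C' x' = i) :
    {y ∈ C | G.dist x y = i}.ncard = {y ∈ C' | G.dist x' y = i}.ncard ∧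
      {y ∈ C | G.dist x y = i + 1}.ncard = {y ∈ C' | G.dist x' y = i + 1}.ncard := by
  have hs := IsClique.ncard_add_ncard hG.1 hC.1 hx
  have hs' := IsClique.ncard_add_ncard hG.1 hC'.1 hx'
  have hCC' : C.ncard = C'.ncard := by exact_mod_cast hC.2.trans hC'.2.symm
  suffices hβ : {y ∈ C | G.dist x y = i + 1}.ncard = {y ∈ C' | G.dist x' y = i + 1}.ncard by
    omega
  rcases lt_or_ge i D with hi | hi
  · have hD : 0 < D := by omega
    have hC0 : (C.ncard : ℝ) ≠ 0 := by exact_mod_cast ((Set.ncard_pos).2 (hC.nonempty hθ)).ne'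
    have hsR : ({y ∈ C | G.dist x y = i}.ncard : ℝ) + {y ∈ C | G.dist x y = i + 1}.ncard =
        C.ncard := by
      exact_mod_cast hs
    have hsR' : ({y ∈ C' | G.dist x' y = i}.ncard : ℝ) + {y ∈ C' | G.dist x' y = i + 1}.ncard =
        C.ncard := by
      exact_mod_cast hs'.trans hCC'.symm
    exact_mod_cast eq_of_mul_add_mul_eq_zero hC0 (hC.standardSeq_ne_zero hG hk hθ hD hx) hsR hsR'
      (hC.ncard_mul_add_ncard_mul_eq_zero hG hk hθ hD hx)
      (hC'.ncard_mul_add_ncard_mul_eq_zero hG hk hθ hD hx')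
  · have hempty : ∀ (C : Set V) (x : V), {y ∈ C | G.dist x y = i + 1} = ∅ := fun C x => by
      ext y
      have := hG.dist_le x y
      simp only [Set.mem_sep_iff, Set.mem_empty_iff_false, iff_false, not_and]
      omega
    rw [hempty, hempty]

end DelsarteClique

lemma exists_common_value {ι β : Type*} (Q : ι → β → Prop) (a : ι → β → ℝ)
    (h : ∀ i p q, Q i p → Q i q → a i p = a i q) :
    ∃ s : ι → ℝ, (∀ i, (∀ p, Q i p → 0 < a i p) → 0 < s i) ∧ ∀ i p, Q i p → a i p = s i := by
  refine ⟨fun i => if hi : ∃ p, Q i p then a i hi.choose else 1, fun i hpos => ?_,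
    fun i p hp => ?_⟩
  · dsimp only
    split_ifs with hi
    · exact hpos _ hi.choose_spec
    · exact one_pos
  · have hi : ∃ p, Q i p := ⟨p, hp⟩
    dsimp only
    rw [dif_pos hi]
    exact h i p _ hp hi.choose_spec

/-- In a distance-regular graph of degree `k` and diameter `D`
(with minimum eigenvalue `θmin`), there exist positive reals
`s⁺₀, …, s⁺_{D-1}` and `s⁻₁, …, s⁻_D` such that for every vertex `x` and every
Delsarte clique `C` at distance `i ≤ D-1` from `x`,
`|Γ_i(x) ∩ C| = s⁺ᵢ` and `|Γ_{i+1}(x) ∩ C| = s⁻_{i+1}`. -/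
theorem statement6 [Fintype V] (G : SimpleGraph V) (D k : ℕ) (b c : ℕ → ℕ)
    (hdrg : IsDistRegular G D b c) (hreg : IsRegularOfDeg G k)
    (θmin : ℝ) (hmin : IsMinEigenvalue G θmin) :
    ∃ sp sm : ℕ → ℝ,
      (∀ i ≤ D - 1, 0 < sp i) ∧ (∀ i : ℕ, 1 ≤ i → i ≤ D → 0 < sm i) ∧
      ∀ (x : V) (C : Set V), IsDelsarteClique G k θmin C →
        ∀ i ≤ D - 1, distToSet G C x = i →
          ({y ∈ C | G.dist x y = i}.ncard : ℝ) = sp i ∧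
          ({y ∈ C | G.dist x y = i + 1}.ncard : ℝ) = sm (i + 1) := by
  let Q (i : ℕ) (p : V × Set V) : Prop := IsDelsarteClique G k θmin p.2 ∧ distToSet G p.2 p.1 = i
  obtain ⟨sp, hsp_pos, hsp⟩ := exists_common_value Q
    (fun i p => ({y ∈ p.2 | G.dist p.1 y = i}.ncard : ℝ)) fun i p q hp hq => by
      exact_mod_cast (hp.1.ncard_eq_of_distToSet_eq hdrg hreg hmin hq.1 hp.2 hq.2).1
  obtain ⟨sm, hsm_pos, hsm⟩ := exists_common_value Q
    (fun i p => ({y ∈ p.2 | G.dist p.1 y = i + 1}.ncard : ℝ)) fun i p q hp hq => by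
      exact_mod_cast (hp.1.ncard_eq_of_distToSet_eq hdrg hreg hmin hq.1 hp.2 hq.2).2
  refine ⟨sp, fun j => sm (j - 1), fun i _ => hsp_pos i fun p hp => ?_,
    fun j hj hjD => hsm_pos _ fun p hp => ?_, fun x C hC i _ hx => ?_⟩
  · exact_mod_cast ncard_dist_eq_distToSet_pos (hp.1.nonempty hmin) hp.2
  · exact_mod_cast hp.1.ncard_dist_eq_succ_pos hdrg hreg hmin hp.2 (by omega)
  · exact ⟨hsp i (x, C) ⟨hC, hx⟩, hsm i (x, C) ⟨hC, hx⟩⟩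

end CliqueBitrade
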